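/- Let (P, ≤, *, 1) be a strongly sectionally pseudocomplemented poset and Θ a congruence on P. Then the class [1]Θ is a filter of P, and for all x, y ∈ P, (x, y) ∈ Θ if and only if x*y ∈ [1]Θ and y*x ∈ [1]Θ; i.e. Φ([1]Θ) = Θ. In particular, every congruence on P is determined by its 1-class. -/

import Mathlib

/-- `star` makes the poset `P` sectionally pseudocomplemented: for all `a b`,
`star a b` is the greatest element `c` of `P` with `L(U(a,b), c) = L(b)`,
where `L(U(a,b), c)` is the set of common lower bounds of `U(a,b) ∪ {c}` and
`U(a,b)` is the set of common upper bounds of `a` and `b`. -/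
def IsSPPoset {P : Type*} [PartialOrder P] (star : P → P → P) : Prop :=
  ∀ a b : P,
    (∀ x : P, ((∀ u : P, a ≤ u → b ≤ u → x ≤ u) ∧ x ≤ star a b) ↔ x ≤ b) ∧
    ∀ c : P, (∀ x : P, ((∀ u : P, a ≤ u → b ≤ u → x ≤ u) ∧ x ≤ c) ↔ x ≤ b) →
      c ≤ star a b

/-- A strongly sectionally pseudocomplemented poset: sectionally pseudocomplemented,
with greatest element `one`, satisfying `x ≤ (x*y)*y`. -/
def IsStronglySPPoset {P : Type*} [PartialOrder P] (star : P → P → P) (one : P) : Prop :=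
  IsSPPoset star ∧ (∀ x : P, x ≤ one) ∧ ∀ x y : P, x ≤ star (star x y) y

open Classical in
/-- The minimum of two (comparable) elements of a poset. -/
noncomputable def pmin {P : Type*} [PartialOrder P] (a c : P) : P :=
  if a ≤ c then a else c

/-- A binary relation on a poset is min-stable if it is closed under taking minima of
componentwise comparable pairs. -/
def MinStable {P : Type*} [PartialOrder P] (ρ : P → P → Prop) : Prop :=
  ∀ a b c d : P, ρ a b → ρ c d → (a ≤ c ∨ c ≤ a) → (b ≤ d ∨ d ≤ b) →
    ρ (pmin a c) (pmin b d)

/-- A congruence on a sectionally pseudocomplemented poset: a min-stable equivalence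
relation compatible with `star`. -/
def IsSPPCong {P : Type*} [PartialOrder P] (star : P → P → P) (Θ : P → P → Prop) : Prop :=
  Equivalence Θ ∧ MinStable Θ ∧
    ∀ a b c d : P, Θ a b → Θ c d → Θ (star a c) (star b d)

/-- A filter of a sectionally pseudocomplemented poset with greatest element `one`. -/
def IsSPPFilter {P : Type*} [PartialOrder P] (star : P → P → P) (one : P) (F : Set P) :
    Prop :=
  one ∈ F ∧
  (∀ x y z : P, star x y ∈ F → star y x ∈ F →
    star (star x z) (star y z) ∈ F ∧ star (star z x) (star z y) ∈ F) ∧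
  (∀ x y z v : P, star x y ∈ F → star y x ∈ F → star z v ∈ F → star v z ∈ F →
    (x ≤ z ∨ z ≤ x) → (y ≤ v ∨ v ≤ y) → star (pmin x z) (pmin y v) ∈ F)

/-- `Φ(M)`: the relation of all pairs `(x, y)` with `star x y ∈ M` and `star y x ∈ M`. -/
def PhiRel {P : Type*} (star : P → P → P) (M : Set P) : P → P → Prop :=
  fun x y => star x y ∈ M ∧ star y x ∈ M

/-- The congruence class of `one` under `Θ`. -/
def oneClass {P : Type*} (Θ : P → P → Prop) (one : P) : Set P := {x : P | Θ x one}

/-!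
If `x Θ y` then `x * y Θ y * y = 1`, since `a * a = 1`. Conversely, if `x * y` and `y * x` lie
in `[1]Θ`, then `(x * y) * y Θ 1 * y = y` and `(y * x) * x Θ x`; since `x ≤ (x * y) * y` and
`y ≤ (y * x) * x`, min-stability of `Θ` yields `x = min(x, (x * y) * y) Θ min((y * x) * x, y) = y`.
So `Θ = Φ([1]Θ)`, and the filter axioms for `[1]Θ` are the congruence axioms of `Θ` read
through this equivalence.
-/

theorem pmin_of_le {P : Type*} [PartialOrder P] {a b : P} (hab : a ≤ b) : pmin a b = a :=
  if_pos hab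

theorem pmin_of_ge {P : Type*} [PartialOrder P] {a b : P} (hba : b ≤ a) : pmin a b = b := by
  unfold pmin
  split_ifs with hab
  · exact le_antisymm hab hba
  · rfl

namespace IsSPPoset

variable {P : Type*} [PartialOrder P] {star : P → P → P} {one : P}

theorem star_self (hsp : IsSPPoset star) (htop : ∀ x : P, x ≤ one) (a : P) :
    star a a = one :=
  le_antisymm (htop _) <| (hsp a a).2 one fun x =>
    ⟨fun hx => hx.1 a le_rfl le_rfl, fun hx => ⟨fun _ _ hu => hx.trans hu, htop x⟩⟩

theorem top_star (hsp : IsSPPoset star) (htop : ∀ x : P, x ≤ one) (b : P) :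
    star one b = b :=
  le_antisymm ((hsp one b).1 _ |>.1 ⟨fun _ hu _ => (htop _).trans hu, le_rfl⟩)
    ((hsp one b).1 b |>.2 le_rfl).2

end IsSPPoset

namespace IsSPPCong

variable {P : Type*} [PartialOrder P] {star : P → P → P} {one : P} {Θ : P → P → Prop}

theorem star_rel_top (hΘ : IsSPPCong star Θ) (hsp : IsSPPoset star) (htop : ∀ x : P, x ≤ one)
    {x y : P} (hxy : Θ x y) : Θ (star x y) one := by
  simpa only [hsp.star_self htop y] using hΘ.2.2 x y y y hxy (hΘ.1.refl y)

theorem rel_of_star_rel_top (hΘ : IsSPPCong star Θ) (h : IsStronglySPPoset star one)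
    {x y : P} (hxy : Θ (star x y) one) (hyx : Θ (star y x) one) : Θ x y := by
  obtain ⟨hsp, htop, hstrong⟩ := h
  have hy : Θ (star (star x y) y) y := by
    simpa only [hsp.top_star htop y] using hΘ.2.2 _ _ y y hxy (hΘ.1.refl y)
  have hx : Θ (star (star y x) x) x := by
    simpa only [hsp.top_star htop x] using hΘ.2.2 _ _ x x hyx (hΘ.1.refl x)
  have hmin := hΘ.2.1 _ _ _ _ (hΘ.1.symm hx) hy (Or.inl (hstrong x y)) (Or.inr (hstrong y x))
  rwa [pmin_of_le (hstrong x y), pmin_of_ge (hstrong y x)] at hmin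

theorem rel_iff_mem_oneClass (hΘ : IsSPPCong star Θ) (h : IsStronglySPPoset star one)
    (x y : P) : Θ x y ↔ star x y ∈ oneClass Θ one ∧ star y x ∈ oneClass Θ one :=
  ⟨fun hxy => ⟨hΘ.star_rel_top h.1 h.2.1 hxy, hΘ.star_rel_top h.1 h.2.1 (hΘ.1.symm hxy)⟩,
    fun ⟨hxy, hyx⟩ => hΘ.rel_of_star_rel_top h hxy hyx⟩

theorem isSPPFilter_oneClass (hΘ : IsSPPCong star Θ) (h : IsStronglySPPoset star one) :
    IsSPPFilter star one (oneClass Θ one) := by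
  have top_rel := fun {x y : P} (hxy : Θ x y) => hΘ.star_rel_top h.1 h.2.1 hxy
  refine ⟨hΘ.1.refl one, fun x y z hxy hyx => ?_, fun x y z v hxy hyx hzv hvz hxz hyv => ?_⟩
  · have hrel := (hΘ.rel_iff_mem_oneClass h x y).2 ⟨hxy, hyx⟩
    exact ⟨top_rel (hΘ.2.2 x y z z hrel (hΘ.1.refl z)),
      top_rel (hΘ.2.2 z z x y (hΘ.1.refl z) hrel)⟩
  · exact top_rel <| hΘ.2.1 x y z v ((hΘ.rel_iff_mem_oneClass h x y).2 ⟨hxy, hyx⟩)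
      ((hΘ.rel_iff_mem_oneClass h z v).2 ⟨hzv, hvz⟩) hxz hyv

end IsSPPCong

theorem stmt_15 {P : Type*} [PartialOrder P] (star : P → P → P) (one : P)
    (h : IsStronglySPPoset star one)
    (Θ : P → P → Prop) (hΘ : IsSPPCong star Θ) :
    IsSPPFilter star one (oneClass Θ one) ∧
    ∀ x y : P, Θ x y ↔ (star x y ∈ oneClass Θ one ∧ star y x ∈ oneClass Θ one) :=
  ⟨hΘ.isSPPFilter_oneClass h, hΘ.rel_iff_mem_oneClass h⟩
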